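/- For the super-adjoint differential d = ad D^p on the superalgebra A = U(g) ⊗ Cl(p) (defined by d(x) = D^p x - (-1)^{|x|} x D^p), one has d(ξ(u)) = 0 for every u ∈ U(r), i.e., the image of ξ consists of cocycles. -/

import Mathlib

/-!
Since `ξ` is an algebra map, it suffices that `D^p` commutes with `ξ x = x ⊗ 1 + 1 ⊗ α x` for
`x ∈ r`. Such an `x` acts on `p` by a `B`-skew endomorphism `T = ad x`, on `U(g)` by `ad x`, and
on `Cl(p)` by `⁅α x, ·⁆`, the derivation extending `T`. The quadratic part `∑ p_l ⊗ q_l` of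
`D^p` is the image of the canonical element of `p ⊗ p`, and the cubic part `γ_p` is the image of
the invariant three-form `B(·, ⁅·, ·⁆)`; both are therefore annihilated by `x`. Each of these
invariances comes down to the identity `∑ β (T p_l) q_l = -∑ β p_l (T q_l)` for bilinear `β`,
which expresses that the canonical element of `p ⊗ p` is killed by a skew `T`.
-/

open scoped TensorProduct
open LinearMap (BilinForm)

attribute [local instance 100] LieRing.ofAssociativeRing

theorem Ring.lie_mul {A : Type*} [Ring A] (a x y : A) : ⁅a, x * y⁆ = ⁅a, x⁆ * y + x * ⁅a, y⁆ := by
  simp only [Ring.lie_def]; noncomm_ring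

namespace LinearMap.BilinForm

section CommRing

variable {K V : Type*} [CommRing K] [AddCommGroup V] [Module K V] {ι : Type*} [DecidableEq ι]

def IsBiorthogonal (B : BilinForm K V) (p q : ι → V) : Prop :=
  ∀ i j, B (p i) (q j) = if i = j then 1 else 0

variable [Fintype ι] {B : BilinForm K V} {p : Module.Basis ι K V} {q : ι → V}

theorem IsBiorthogonal.sum_apply_smul_basis (hpq : B.IsBiorthogonal p q) (v : V) :
    ∑ j, B v (q j) • p j = v := by
  obtain ⟨c, rfl⟩ : ∃ c : ι → K, ∑ i, c i • p i = v := ⟨_, p.sum_repr v⟩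
  simp [map_sum, hpq _ _]

theorem IsBiorthogonal.linearIndependent (hpq : B.IsBiorthogonal p q) : LinearIndependent K q := by
  refine Fintype.linearIndependent_iff.mpr fun c hc i => ?_
  simpa [map_sum, hpq _ _] using congrArg (B (p i)) hc

end CommRing

section Field

variable {K V : Type*} [Field K] [AddCommGroup V] [Module K V] {ι : Type*} [Fintype ι]
  [DecidableEq ι] {B : BilinForm K V} {p : Module.Basis ι K V} {q : ι → V}

theorem IsBiorthogonal.sum_basis_apply_smul (hpq : B.IsBiorthogonal p q) (v : V) :
    ∑ j, B (p j) v • q j = v := by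
  have : FiniteDimensional K V := p.finiteDimensional_of_finite
  have hspan := hpq.linearIndependent.span_eq_top_of_card_eq_finrank'
    (Module.finrank_eq_card_basis p).symm
  obtain ⟨c, rfl⟩ :=
    (Submodule.mem_span_range_iff_exists_fun K).mp (hspan ▸ Submodule.mem_top (x := v))
  simp [map_sum, hpq _ _]

theorem IsBiorthogonal.sum_apply_skew {M : Type*} [AddCommGroup M] [Module K M]
    (hpq : B.IsBiorthogonal p q) {T : Module.End K V} (hT : IsSkewAdjoint B T)
    (β : V →ₗ[K] V →ₗ[K] M) :
    ∑ l, β (T (p l)) (q l) = -∑ l, β (p l) (T (q l)) := by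
  calc ∑ l, β (T (p l)) (q l)
      = ∑ l, ∑ m, B (T (p l)) (q m) • β (p m) (q l) := by
        refine Finset.sum_congr rfl fun l _ => ?_
        conv_lhs => rw [← hpq.sum_apply_smul_basis (T (p l))]
        simp [map_sum]
    _ = -∑ m, ∑ l, B (p l) (T (q m)) • β (p m) (q l) := by
        rw [Finset.sum_comm, ← Finset.sum_neg_distrib]
        simp [hT _ _]
    _ = -∑ m, β (p m) (T (q m)) := by
        simp_rw [← map_smul, ← map_sum, hpq.sum_basis_apply_smul]

theorem IsBiorthogonal.sum_smul_skew {M : Type*} [AddCommGroup M] [Module K M]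
    (hpq : B.IsBiorthogonal p q) {T : Module.End K V} (hT : IsSkewAdjoint B T)
    (φ : V →ₗ[K] K) (F : V →ₗ[K] M) :
    ∑ l, φ (q l) • F (T (p l)) = -∑ l, φ (T (q l)) • F (p l) :=
  hpq.sum_apply_skew hT (LinearMap.smulRightₗ φ ∘ₗ F)

variable {U C : Type*} [Ring U] [Algebra K U] [Ring C] [Algebra K C]

theorem IsBiorthogonal.commute_sum_tmul (hpq : B.IsBiorthogonal p q)
    {T : Module.End K V} (hT : IsSkewAdjoint B T) (f : V →ₗ[K] U) (h : V →ₗ[K] C) {X : U} {a : C}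
    (hX : ∀ v, ⁅X, f v⁆ = f (T v)) (ha : ∀ v, ⁅a, h v⁆ = h (T v)) :
    Commute (∑ l, f (p l) ⊗ₜ[K] h (q l)) (X ⊗ₜ[K] 1 + 1 ⊗ₜ[K] a) := by
  have lie_tmul : ∀ u c, ⁅u ⊗ₜ[K] c, X ⊗ₜ[K] (1 : C) + 1 ⊗ₜ[K] a⁆ =
      -(⁅X, u⁆ ⊗ₜ[K] c + u ⊗ₜ[K] ⁅a, c⁆) := by
    intro u c
    simp only [Ring.lie_def, mul_add, add_mul, Algebra.TensorProduct.tmul_mul_tmul, mul_one,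
      one_mul, TensorProduct.sub_tmul, TensorProduct.tmul_sub]
    abel
  rw [commute_iff_lie_eq, sum_lie]
  simp only [lie_tmul, hX, ha, Finset.sum_neg_distrib, Finset.sum_add_distrib, neg_eq_zero]
  simpa [add_eq_zero_iff_eq_neg] using
    hpq.sum_apply_skew hT ((TensorProduct.mk K U C).compl₁₂ f h)

theorem IsBiorthogonal.commute_sum_smul_mul_mul (hpq : B.IsBiorthogonal p q)
    {T : Module.End K V} (hT : IsSkewAdjoint B T) (Φ : V →ₗ[K] V →ₗ[K] V →ₗ[K] K)
    (hΦ : ∀ u v w, Φ (T u) v w + Φ u (T v) w + Φ u v (T w) = 0) (h : V →ₗ[K] C) {a : C}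
    (ha : ∀ v, ⁅a, h v⁆ = h (T v)) :
    Commute a (∑ l, ∑ m, ∑ n, Φ (q l) (q m) (q n) • (h (p l) * h (p m) * h (p n))) := by
  -- In each slot, make the index carrying `T` innermost and move `T` from `p` to `q`.
  have slot₁ : ∑ l, ∑ m, ∑ n, Φ (q l) (q m) (q n) • (h (T (p l)) * h (p m) * h (p n)) =
      -∑ l, ∑ m, ∑ n, Φ (T (q l)) (q m) (q n) • (h (p l) * h (p m) * h (p n)) := by
    conv_lhs => rw [Finset.sum_comm_cycle, Finset.sum_comm_cycle]
    conv_rhs => rw [Finset.sum_comm_cycle, Finset.sum_comm_cycle]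
    simp only [← Finset.sum_neg_distrib]
    refine Finset.sum_congr rfl fun m _ => Finset.sum_congr rfl fun n _ => ?_
    simpa [mul_assoc] using hpq.sum_smul_skew hT ((Φ.flip (q m)).flip (q n))
      (LinearMap.mulRight K (h (p n)) ∘ₗ LinearMap.mulRight K (h (p m)) ∘ₗ h)
  have slot₂ : ∑ l, ∑ m, ∑ n, Φ (q l) (q m) (q n) • (h (p l) * h (T (p m)) * h (p n)) =
      -∑ l, ∑ m, ∑ n, Φ (q l) (T (q m)) (q n) • (h (p l) * h (p m) * h (p n)) := by
    simp only [← Finset.sum_neg_distrib]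
    refine Finset.sum_congr rfl fun l _ => ?_
    conv_lhs => rw [Finset.sum_comm]
    conv_rhs => rw [Finset.sum_comm]
    refine Finset.sum_congr rfl fun n _ => ?_
    simpa [mul_assoc] using hpq.sum_smul_skew hT ((Φ (q l)).flip (q n))
      (LinearMap.mulRight K (h (p n)) ∘ₗ LinearMap.mulLeft K (h (p l)) ∘ₗ h)
  have slot₃ : ∑ l, ∑ m, ∑ n, Φ (q l) (q m) (q n) • (h (p l) * h (p m) * h (T (p n))) =
      -∑ l, ∑ m, ∑ n, Φ (q l) (q m) (T (q n)) • (h (p l) * h (p m) * h (p n)) := by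
    simp only [← Finset.sum_neg_distrib]
    refine Finset.sum_congr rfl fun l _ => Finset.sum_congr rfl fun m _ => ?_
    simpa [mul_assoc] using hpq.sum_smul_skew hT (Φ (q l) (q m))
      (LinearMap.mulLeft K (h (p l) * h (p m)) ∘ₗ h)
  rw [commute_iff_lie_eq]
  calc ⁅a, ∑ l, ∑ m, ∑ n, Φ (q l) (q m) (q n) • (h (p l) * h (p m) * h (p n))⁆
    _ = (∑ l, ∑ m, ∑ n, Φ (q l) (q m) (q n) • (h (T (p l)) * h (p m) * h (p n))) +
        (∑ l, ∑ m, ∑ n, Φ (q l) (q m) (q n) • (h (p l) * h (T (p m)) * h (p n))) +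
        ∑ l, ∑ m, ∑ n, Φ (q l) (q m) (q n) • (h (p l) * h (p m) * h (T (p n))) := by
      simp only [lie_sum, lie_smul (R := K) (L := C), Ring.lie_mul, ha, add_mul, smul_add,
        Finset.sum_add_distrib]
    _ = -∑ l, ∑ m, ∑ n, (Φ (T (q l)) (q m) (q n) + Φ (q l) (T (q m)) (q n) +
          Φ (q l) (q m) (T (q n))) • (h (p l) * h (p m) * h (p n)) := by
      simp only [slot₁, slot₂, slot₃, add_smul, Finset.sum_add_distrib, neg_add]
    _ = 0 := by simp [hΦ]

end Field

section Lie

variable {K g : Type*} [CommRing K] [LieRing g] [LieAlgebra K g] {B : BilinForm K g}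

theorem lieInvariant_of_apply_lie (hB : ∀ x y z : g, B ⁅x, y⁆ z = B x ⁅y, z⁆) :
    B.lieInvariant g := by
  intro x y z
  rw [← lie_skew, map_neg, LinearMap.neg_apply, hB]

theorem isSkewAdjoint_restrict_ad (hB : B.lieInvariant g) {P : Submodule K g} {x : g}
    (hx : ∀ v ∈ P, ⁅x, v⁆ ∈ P) :
    IsSkewAdjoint (B.restrict P) ((LieAlgebra.ad K g x).restrict hx) := fun v w =>
  (hB x v w).trans (map_neg (B v) _).symm

def cartanThreeForm (B : BilinForm K g) (P : Submodule K g) : P →ₗ[K] P →ₗ[K] P →ₗ[K] K :=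
  (((LinearMap.llcomp K g g K ∘ₗ B).compl₂ (LieAlgebra.ad K g).toLinearMap).compl₁₂
    P.subtype P.subtype).compr₂ (LinearMap.lcomp K K P.subtype)

@[simp]
theorem cartanThreeForm_apply (P : Submodule K g) (u v w : P) :
    B.cartanThreeForm P u v w = B u ⁅(v : g), (w : g)⁆ := rfl

theorem cartanThreeForm_restrict_ad (hB : B.lieInvariant g) {P : Submodule K g} {x : g}
    (hx : ∀ v ∈ P, ⁅x, v⁆ ∈ P) (u v w : P) :
    B.cartanThreeForm P ((LieAlgebra.ad K g x).restrict hx u) v w +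
      B.cartanThreeForm P u ((LieAlgebra.ad K g x).restrict hx v) w +
      B.cartanThreeForm P u v ((LieAlgebra.ad K g x).restrict hx w) = 0 := by
  simp only [cartanThreeForm_apply]
  change B ⁅x, (u : g)⁆ ⁅(v : g), w⁆ + B u ⁅⁅x, (v : g)⁆, w⁆ + B u ⁅(v : g), ⁅x, (w : g)⁆⁆ = 0
  rw [hB, add_assoc, ← map_add, ← leibniz_lie, neg_add_cancel]

end Lie

end LinearMap.BilinForm

@[elab_as_elim]
theorem UniversalEnvelopingAlgebra.induction {R L : Type*} [CommRing R] [LieRing L]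
    [LieAlgebra R L] {C : UniversalEnvelopingAlgebra R L → Prop}
    (algebraMap : ∀ r, C (algebraMap R _ r)) (ι : ∀ x, C (UniversalEnvelopingAlgebra.ι R x))
    (mul : ∀ a b, C a → C b → C (a * b)) (add : ∀ a b, C a → C b → C (a + b))
    (a : UniversalEnvelopingAlgebra R L) : C a := by
  obtain ⟨t, rfl⟩ := RingCon.mkₐ_surjective (α := R) _ a
  induction t using TensorAlgebra.induction with
  | algebraMap r => exact algebraMap r
  | ι x => exact ι x
  | mul a b ha hb => exact mul _ _ ha hb
  | add a b ha hb => exact add _ _ ha hb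

variable {g : Type*} [LieRing g] [LieAlgebra ℂ g] [FiniteDimensional ℂ g]

theorem xi_image_consists_of_cocycles_general
    (B : BilinForm ℂ g)
    (hinv : ∀ x y z : g, B ⁅x, y⁆ z = B x ⁅y, z⁆)
    (r : LieSubalgebra ℂ g)
    (hstab : ∀ x ∈ r, ∀ y ∈ B.orthogonal r.toSubmodule,
      ⁅x, y⁆ ∈ B.orthogonal r.toSubmodule)
    (α : r →ₗ⁅ℂ⁆
        CliffordAlgebra (B.restrict (B.orthogonal r.toSubmodule)).toQuadraticMap)
    (hα : ∀ (x : r) (y : B.orthogonal r.toSubmodule),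
      ⁅α x, CliffordAlgebra.ι (B.restrict (B.orthogonal r.toSubmodule)).toQuadraticMap y⁆ =
        CliffordAlgebra.ι (B.restrict (B.orthogonal r.toSubmodule)).toQuadraticMap
          ⟨⁅(x : g), (y : g)⁆, hstab x x.2 y y.2⟩)
    (ξ : UniversalEnvelopingAlgebra ℂ r →ₐ[ℂ]
        UniversalEnvelopingAlgebra ℂ g ⊗[ℂ]
          CliffordAlgebra (B.restrict (B.orthogonal r.toSubmodule)).toQuadraticMap)
    (hξ : ∀ x : r, ξ (UniversalEnvelopingAlgebra.ι ℂ x)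
      = (UniversalEnvelopingAlgebra.ι ℂ (x : g)) ⊗ₜ[ℂ] 1 + 1 ⊗ₜ[ℂ] α x)
    {ι : Type*} [Fintype ι] [DecidableEq ι]
    (p : Module.Basis ι ℂ (B.orthogonal r.toSubmodule)) (q : ι → (B.orthogonal r.toSubmodule))
    (hpq : ∀ i j, B (p i : g) (q j : g) = if i = j then 1 else 0)
    (γp : CliffordAlgebra (B.restrict (B.orthogonal r.toSubmodule)).toQuadraticMap)
    (hγ : γp = (6⁻¹ : ℂ) • ∑ l, ∑ m, ∑ n,
      B (q l : g) ⁅(q m : g), (q n : g)⁆ •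
        (CliffordAlgebra.ι (B.restrict (B.orthogonal r.toSubmodule)).toQuadraticMap (p l) *
         CliffordAlgebra.ι (B.restrict (B.orthogonal r.toSubmodule)).toQuadraticMap (p m) *
         CliffordAlgebra.ι (B.restrict (B.orthogonal r.toSubmodule)).toQuadraticMap (p n)))
    (Dp : UniversalEnvelopingAlgebra ℂ g ⊗[ℂ]
        CliffordAlgebra (B.restrict (B.orthogonal r.toSubmodule)).toQuadraticMap)
    (hD : Dp = (∑ l, (UniversalEnvelopingAlgebra.ι ℂ (p l : g)) ⊗ₜ[ℂ]
        CliffordAlgebra.ι (B.restrict (B.orthogonal r.toSubmodule)).toQuadraticMap (q l))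
      - 1 ⊗ₜ[ℂ] γp) :
    ∀ u : UniversalEnvelopingAlgebra ℂ r, Dp * ξ u - ξ u * Dp = 0 := by
  have hB : B.lieInvariant g := LinearMap.BilinForm.lieInvariant_of_apply_lie hinv
  intro u
  refine sub_eq_zero.mpr (Commute.eq ?_)
  induction u using UniversalEnvelopingAlgebra.induction with
  | algebraMap c => rw [AlgHom.commutes]; exact Algebra.commute_algebraMap_right c Dp
  | mul a b ha hb => rw [map_mul]; exact ha.mul_right hb
  | add a b ha hb => rw [map_add]; exact ha.add_right hb
  | ι x =>
    have hx : ∀ v ∈ B.orthogonal r.toSubmodule, ⁅(x : g), v⁆ ∈ B.orthogonal r.toSubmodule :=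
      hstab x x.2
    have hT := LinearMap.BilinForm.isSkewAdjoint_restrict_ad hB hx
    have hdual : (B.restrict _).IsBiorthogonal p q := hpq
    have hγα := (hdual.commute_sum_smul_mul_mul hT _
      (LinearMap.BilinForm.cartanThreeForm_restrict_ad hB hx) _ (hα x)).smul_right (6⁻¹ : ℂ)
    rw [hξ, hD, hγ]
    refine (hdual.commute_sum_tmul hT
      ((UniversalEnvelopingAlgebra.ι ℂ).toLinearMap ∘ₗ Submodule.subtype _) _
      (fun v => (LieHom.map_lie _ _ _).symm) (hα x)).sub_left ?_
    exact ((Commute.one_left _).tmul (Commute.one_right _)).add_right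
      ((Commute.one_left _).tmul hγα.symm)

/-- For the super-adjoint differential `d = ad D^p` on
`U(g) ⊗ Cl(p)`, every element of the image of `ξ : U(r) → U(g) ⊗ Cl(p)` is a cocycle:
`d(ξ(u)) = 0` for all `u ∈ U(r)`.  Since `ξ` takes values in the even part, the
super-commutator `d(ξ(u)) = D^p ξ(u) - (-1)^{|ξ(u)|} ξ(u) D^p` is the ordinary
commutator `D^p ξ(u) - ξ(u) D^p`. -/
theorem xi_image_consists_of_cocycles
    (B : BilinForm ℂ g)
    (hsymm : ∀ x y : g, B x y = B y x)
    (hinv : ∀ x y z : g, B ⁅x, y⁆ z = B x ⁅y, z⁆)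
    (hnondeg : B.Nondegenerate)
    (r : LieSubalgebra ℂ g)
    (hr : (B.restrict r.toSubmodule).Nondegenerate)
    (hstab : ∀ x ∈ r, ∀ y ∈ B.orthogonal r.toSubmodule,
      ⁅x, y⁆ ∈ B.orthogonal r.toSubmodule)
    (α : r →ₗ⁅ℂ⁆
        CliffordAlgebra (B.restrict (B.orthogonal r.toSubmodule)).toQuadraticMap)
    (hα : ∀ (x : r) (y : B.orthogonal r.toSubmodule),
      ⁅α x, CliffordAlgebra.ι (B.restrict (B.orthogonal r.toSubmodule)).toQuadraticMap y⁆ =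
        CliffordAlgebra.ι (B.restrict (B.orthogonal r.toSubmodule)).toQuadraticMap
          ⟨⁅(x : g), (y : g)⁆, hstab x x.2 y y.2⟩)
    (ξ : UniversalEnvelopingAlgebra ℂ r →ₐ[ℂ]
        UniversalEnvelopingAlgebra ℂ g ⊗[ℂ]
          CliffordAlgebra (B.restrict (B.orthogonal r.toSubmodule)).toQuadraticMap)
    (hξ : ∀ x : r, ξ (UniversalEnvelopingAlgebra.ι ℂ x)
      = (UniversalEnvelopingAlgebra.ι ℂ (x : g)) ⊗ₜ[ℂ] 1 + 1 ⊗ₜ[ℂ] α x)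
    {ι : Type*} [Fintype ι] [DecidableEq ι]
    (p : Module.Basis ι ℂ (B.orthogonal r.toSubmodule)) (q : ι → (B.orthogonal r.toSubmodule))
    (hpq : ∀ i j, B (p i : g) (q j : g) = if i = j then 1 else 0)
    (γp : CliffordAlgebra (B.restrict (B.orthogonal r.toSubmodule)).toQuadraticMap)
    (hγ : γp = (6⁻¹ : ℂ) • ∑ l, ∑ m, ∑ n,
      B (q l : g) ⁅(q m : g), (q n : g)⁆ •
        (CliffordAlgebra.ι (B.restrict (B.orthogonal r.toSubmodule)).toQuadraticMap (p l) *
         CliffordAlgebra.ι (B.restrict (B.orthogonal r.toSubmodule)).toQuadraticMap (p m) *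
         CliffordAlgebra.ι (B.restrict (B.orthogonal r.toSubmodule)).toQuadraticMap (p n)))
    (Dp : UniversalEnvelopingAlgebra ℂ g ⊗[ℂ]
        CliffordAlgebra (B.restrict (B.orthogonal r.toSubmodule)).toQuadraticMap)
    (hD : Dp = (∑ l, (UniversalEnvelopingAlgebra.ι ℂ (p l : g)) ⊗ₜ[ℂ]
        CliffordAlgebra.ι (B.restrict (B.orthogonal r.toSubmodule)).toQuadraticMap (q l))
      - 1 ⊗ₜ[ℂ] γp) :
    ∀ u : UniversalEnvelopingAlgebra ℂ r, Dp * ξ u - ξ u * Dp = 0 :=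
  xi_image_consists_of_cocycles_general B hinv r hstab α hα ξ hξ p q hpq γp hγ Dp hD
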